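/- arXiv:1602.08408 — 6 statements merged into one kernel-verified Lean document; each statement's English description precedes it below -/
import Mathlib

section
/- Let r be an odd prime, p a prime with p ≠ r, and q a prime with q ≡ 1 (mod r). Then the polynomial (X − 1)^p − q is irreducible over ℚ but reducible over the field ℚ_r of r-adic numbers. -/
/-!
Substituting `X ↦ X - 1` reduces everything to `X ^ p - q`, which for prime `p` is irreducible
exactly when `q` is not a `p`-th power. In `ℚ` it is not, by comparing `q`-adic valuations. In
`ℤ_[r]` it is: `X = 1` is an approximate root of `X ^ p - q` because `q ≡ 1 [MOD r]`, and a simple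
one because `r ∤ p`, so Hensel's lemma lifts it to a root.
-/

open Polynomial

theorem irreducible_X_sub_one_pow_sub_C_iff {R : Type*} [CommRing R] (n : ℕ) (c : R) :
    Irreducible ((X - 1) ^ n - C c) ↔ Irreducible (X ^ n - C c) := by
  have hshift : algEquivAevalXAddC (-1 : R) (X ^ n - C c) = (X - 1) ^ n - C c := by
    simp [sub_eq_add_neg]
  rw [← hshift, MulEquiv.irreducible_iff]

theorem Rat.pow_ne_natCast_of_prime {n q : ℕ} (hn : n ≠ 1) (hq : q.Prime) (b : ℚ) :
    b ^ n ≠ q := by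
  have := Fact.mk hq
  intro hb
  have hval : (n : ℤ) * padicValRat q b = 1 := by
    rw [← padicValRat.pow, hb, padicValRat.self hq.one_lt]
  exact hn (by exact_mod_cast Int.eq_one_of_mul_eq_one_right (by positivity) hval)

theorem PadicInt.exists_pow_eq_of_norm_sub_one_lt_one {r : ℕ} [Fact r.Prime] {n : ℕ}
    (hn : ¬ r ∣ n) {a : ℤ_[r]} (ha : ‖a - 1‖ < 1) : ∃ z : ℤ_[r], z ^ n = a := by
  have hderiv : ‖(n : ℤ_[r])‖ = 1 :=
    norm_natCast_eq_one_iff.mpr ((Nat.Prime.coprime_iff_not_dvd Fact.out).mpr hn)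
  have hnorm : ‖(X ^ n - C a).aeval (1 : ℤ_[r])‖ <
      ‖(X ^ n - C a).derivative.aeval (1 : ℤ_[r])‖ ^ 2 := by
    simpa [derivative_X_pow, norm_sub_rev, hderiv] using ha
  obtain ⟨z, hz, -⟩ := hensels_lemma hnorm
  exact ⟨z, sub_eq_zero.mp (by simpa using hz)⟩

theorem stmt1_general (r p q : ℕ) [Fact (Nat.Prime r)]
    (hp : Nat.Prime p) (hpr : p ≠ r) (hq : Nat.Prime q)
    (hqr : q ≡ 1 [MOD r]) :
    Irreducible ((Polynomial.X - 1) ^ p - Polynomial.C (q : ℚ)) ∧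
      ¬ Irreducible ((Polynomial.X - 1) ^ p - Polynomial.C (q : ℚ_[r])) := by
  simp only [irreducible_X_sub_one_pow_sub_C_iff, X_pow_sub_C_irreducible_iff_of_prime hp]
  refine ⟨Rat.pow_ne_natCast_of_prime hp.one_lt.ne' hq, ?_⟩
  have hr : ¬ r ∣ p := fun h => hpr ((Nat.prime_dvd_prime_iff_eq Fact.out hp).mp h).symm
  have hq1 : ‖(q : ℤ_[r]) - 1‖ < 1 := by
    simpa using (PadicInt.norm_int_lt_one_iff_dvd ((q : ℤ) - 1)).mpr hqr.symm.dvd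
  obtain ⟨z, hz⟩ := PadicInt.exists_pow_eq_of_norm_sub_one_lt_one hr hq1
  push Not
  exact ⟨z, by exact_mod_cast congrArg ((↑) : ℤ_[r] → ℚ_[r]) hz⟩

/-- Let `r` be an odd prime, `p` a prime with `p ≠ r`, and `q` a prime with
`q ≡ 1 (mod r)`. Then `(X − 1)^p − q` is irreducible over `ℚ` but reducible
over the field `ℚ_[r]` of `r`-adic numbers. -/
theorem stmt1 (r p q : ℕ) [Fact (Nat.Prime r)] (hrodd : Odd r)
    (hp : Nat.Prime p) (hpr : p ≠ r) (hq : Nat.Prime q)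
    (hqr : q ≡ 1 [MOD r]) :
    Irreducible ((Polynomial.X - 1) ^ p - Polynomial.C (q : ℚ)) ∧
      ¬ Irreducible ((Polynomial.X - 1) ^ p - Polynomial.C (q : ℚ_[r])) :=
  stmt1_general r p q hp hpr hq hqr
end

section
/- Let (K, v) be a valued field, n ≥ 1 an integer, and f = X^n + b_{n−1}X^{n−1} + b_{n−2}X^{n−2} + ⋯ + b_0 ∈ K[X] a monic polynomial with v(b_{n−1}) = 0 and v(b_i) > 0 for all 0 ≤ i ≤ n−2. Suppose f splits over K, say f = (X − c_1)(X − c_2)⋯(X − c_n). Then v(c_i) ≥ 0 for every i, and there is exactly one index i with v(c_i) = 0 (all other roots have strictly positive valuation). -/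
/-!
Let `M` be the largest value of `v` on the roots and `S` the set of roots where it is attained.
In the elementary symmetric sum `e_{#S}` the product over `S` has value `M ^ #S` while every
other product has a strictly smaller value, so `v(b_{n - #S}) = M ^ #S`. Since
`1 = v(b_{n-1}) = v(e_1) ≤ M`, the hypothesis `v(b_i) < 1` for `i ≤ n - 2` forces `#S = 1`,
and then `M = v(b_{n-1}) = 1`.
-/

open Finset Polynomial

theorem Finset.prod_X_sub_C_coeff_card_sub {R ι : Type*} [CommRing R] (s : Finset ι)
    (r : ι → R) {k : ℕ} (hk : k ≤ #s) :
    (∏ i ∈ s, (X - C (r i))).coeff (#s - k) =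
      (-1) ^ k * ∑ t ∈ s.powersetCard k, ∏ i ∈ t, r i := by
  classical
  have hcard : Multiset.card (s.val.map r) = #s := Multiset.card_map _ _
  rw [Finset.prod_eq_multiset_prod, show s.val.map (fun i => X - C (r i)) =
      (s.val.map r).map (fun t => X - C t) by rw [Multiset.map_map]; rfl,
    Multiset.prod_X_sub_C_coeff _ (hcard ▸ Nat.sub_le _ _), hcard, Nat.sub_sub_self hk,
    Finset.esymm_map_val]

namespace Valuation

variable {R Γ₀ : Type*} [CommRing R] [LinearOrderedCommGroupWithZero Γ₀] (v : Valuation R Γ₀)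

theorem map_coeff_prod_X_sub_C_card_sub {ι : Type*} (s : Finset ι) (r : ι → R) {k : ℕ}
    (hk : k ≤ #s) :
    v ((∏ i ∈ s, (X - C (r i))).coeff (#s - k)) =
      v (∑ t ∈ s.powersetCard k, ∏ i ∈ t, r i) := by
  rw [s.prod_X_sub_C_coeff_card_sub r hk, v.map_mul, map_pow, map_neg, map_one, one_pow, one_mul]

theorem map_prod_lt_pow_card {ι : Type*} {s : Finset ι} {f : ι → R} {M : Γ₀}
    (hM : ∀ i ∈ s, v (f i) ≤ M) {a : ι} (ha : a ∈ s) (hlt : v (f a) < M) :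
    v (∏ i ∈ s, f i) < M ^ #s := by
  classical
  have hrest : v (∏ i ∈ s.erase a, f i) ≤ M ^ #(s.erase a) := by
    rw [map_prod]
    exact prod_le_pow_card _ _ _ fun i hi => hM i (mem_of_mem_erase hi)
  have hM0 : 0 < M ^ #(s.erase a) := pow_pos (zero_le.trans_lt hlt) _
  calc v (∏ i ∈ s, f i) = v (f a) * v (∏ i ∈ s.erase a, f i) := by
        rw [← mul_prod_erase s f ha, v.map_mul]
    _ ≤ v (f a) * M ^ #(s.erase a) := mul_le_mul_right hrest _
    _ < M * M ^ #(s.erase a) := mul_lt_mul_of_pos_right hlt hM0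
    _ = M ^ #s := by rw [← pow_succ', card_erase_add_one ha]

/-- With `S` the set of indices where `v ∘ c` attains `M`, the term `∏ i ∈ S, c i` dominates all
other products over subsets of size `#S`: each of them contains an index outside `S`. -/
theorem map_sum_powersetCard_prod_eq_pow_card {ι : Type*} [Fintype ι] [DecidableEq ι] (c : ι → R)
    {M : Γ₀} (hM : ∀ i, v (c i) ≤ M) :
    v (∑ t ∈ powersetCard #{i | v (c i) = M} univ, ∏ i ∈ t, c i) = M ^ #{i | v (c i) = M} := by
  set S : Finset ι := {i | v (c i) = M}
  have hS : v (∏ i ∈ S, c i) = M ^ #S := by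
    rw [map_prod, prod_congr rfl fun i hi => (mem_filter.mp hi).2, prod_const]
  rw [← hS]
  refine v.map_sum_eq_of_lt (mem_powersetCard.mpr ⟨subset_univ S, rfl⟩) fun t ht => ?_
  obtain ⟨htcard, htS⟩ : #t = #S ∧ t ≠ S := by
    simp only [mem_sdiff, mem_powersetCard, mem_singleton] at ht
    exact ⟨ht.1.2, ht.2⟩
  obtain ⟨a, hat, haS⟩ := not_subset.mp fun h => htS (eq_of_subset_of_card_le h htcard.ge)
  have hlt : v (c a) < M := (hM a).lt_of_ne fun h => haS (mem_filter.mpr ⟨mem_univ a, h⟩)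
  rw [hS, ← htcard]
  exact v.map_prod_lt_pow_card (fun i _ => hM i) hat hlt

end Valuation

/-- Let `(K, v)` be a valued field, `n ≥ 1`, and `f` a monic polynomial of degree `n`
whose coefficient `b_{n-1}` has `v(b_{n-1}) = 0` (multiplicatively, `v = 1`) and whose
coefficients `b_i` for `i ≤ n-2` have `v(b_i) > 0` (multiplicatively, `v < 1`).
Suppose `f` splits, `f = (X - c_1) ⋯ (X - c_n)`. Then every root satisfies `v(c_i) ≤ 1`
and there is exactly one index `i` with `v(c_i) = 1`. -/
theorem stmt3 {K : Type*} [Field K] {Γ₀ : Type*} [LinearOrderedCommGroupWithZero Γ₀]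
    (v : Valuation K Γ₀) (n : ℕ) (hn : 1 ≤ n) (c : Fin n → K)
    (f : Polynomial K) (hf : f = ∏ i, (Polynomial.X - Polynomial.C (c i)))
    (hcoeff1 : v (f.coeff (n - 1)) = 1)
    (hcoeffs : ∀ i, i + 2 ≤ n → v (f.coeff i) < 1) :
    (∀ i, v (c i) ≤ 1) ∧ ∃! i, v (c i) = 1 := by
  have hcoeff (k : ℕ) (hk : k ≤ n) :
      v (f.coeff (n - k)) = v (∑ t ∈ powersetCard k univ, ∏ i ∈ t, c i) := by
    simpa [hf] using v.map_coeff_prod_X_sub_C_card_sub univ c (k := k) (by simpa using hk)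
  obtain ⟨j, -, hj⟩ := exists_max_image univ (fun i => v (c i)) (univ_nonempty_iff.mpr ⟨⟨0, hn⟩⟩)
  set M := v (c j)
  have hmax (i : Fin n) : v (c i) ≤ M := hj i (mem_univ i)
  have hM : 1 ≤ M := by
    rw [← hcoeff1, hcoeff 1 hn, powersetCard_one, sum_map]
    simpa using v.map_sum_le fun i _ => hmax i
  set S : Finset (Fin n) := {i | v (c i) = M}
  have hSn : #S ≤ n := card_le_univ S |>.trans_eq (Fintype.card_fin n)
  have hS : v (f.coeff (n - #S)) = M ^ #S :=
    (hcoeff _ hSn).trans (v.map_sum_powersetCard_prod_eq_pow_card c hmax)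
  have hcard : #S = 1 := by
    have hS0 : 0 < #S := card_pos.mpr ⟨j, mem_filter.mpr ⟨mem_univ j, rfl⟩⟩
    by_contra hS1
    exact (one_le_pow_of_one_le' hM _).not_gt (hS ▸ hcoeffs _ (by omega))
  have hM1 : M = 1 := by rwa [hcard, pow_one, hcoeff1, eq_comm] at hS
  exact ⟨fun i => hM1 ▸ hmax i, (Fintype.existsUnique_iff_card_one _).mpr (hM1 ▸ hcard)⟩
end

section
/- Let (K, v) be a valued field, n ≥ 2 an integer, and c_1, …, c_n ∈ K with v(c_1) = 0 and v(c_i) > 0 for all 2 ≤ i ≤ n. Write (X − c_1)(X − c_2)⋯(X − c_n) = X^n + a_{n−1}X^{n−1} + a_{n−2}X^{n−2} + ⋯ + a_0. Then v(a_{n−1}) = 0 and v(a_k) > 0 for all 0 ≤ k ≤ n−2. -/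
/-- Let `(K, v)` be a valued field, `n ≥ 2`, and `c_1, …, c_n ∈ K` with `v(c_1) = 0`
(multiplicatively, `v(c_1) = 1`) and `v(c_i) > 0` (multiplicatively, `v(c_i) < 1`)
for `i ≥ 2`. Writing `(X - c_1) ⋯ (X - c_n) = X^n + a_{n-1}X^{n-1} + ⋯ + a_0`,
we have `v(a_{n-1}) = 0` and `v(a_k) > 0` for `k ≤ n - 2`. -/
theorem stmt4 {K : Type*} [Field K] {Γ₀ : Type*} [LinearOrderedCommGroupWithZero Γ₀]
    (v : Valuation K Γ₀) (n : ℕ) (hn : 2 ≤ n) (c : Fin n → K)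
    (hc1 : v (c ⟨0, by omega⟩) = 1)
    (hci : ∀ i : Fin n, (i : ℕ) ≠ 0 → v (c i) < 1)
    (f : Polynomial K) (hf : f = ∏ i, (Polynomial.X - Polynomial.C (c i))) :
    v (f.coeff (n - 1)) = 1 ∧ ∀ k, k + 2 ≤ n → v (f.coeff k) < 1 := by
  set z : Fin n := ⟨0, by omega⟩ with hz
  have hle : ∀ i : Fin n, v (c i) ≤ 1 := by
    intro i
    by_cases h : (i : ℕ) = 0
    · have : i = z := Fin.ext h
      rw [this, hc1]
    · exact (hci i h).le
  -- coefficient formula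
  have key : ∀ k : ℕ, k ≤ n → f.coeff k =
      (-1) ^ (n - k) * ∑ t ∈ Finset.univ.powersetCard (n - k), ∏ i ∈ t, c i := by
    intro k hk
    have hcard : Multiset.card (Multiset.map c Finset.univ.val) = n := by simp
    have h1 := Multiset.prod_X_sub_C_coeff (Multiset.map c (Finset.univ.val : Multiset (Fin n)))
      (k := k) (by rw [hcard]; exact hk)
    rw [hcard] at h1
    have h2 : f = ((Multiset.map c (Finset.univ.val : Multiset (Fin n))).map
        fun t => Polynomial.X - Polynomial.C t).prod := by
      rw [hf, Multiset.map_map, Finset.prod]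
      rfl
    rw [h2, h1, Finset.esymm_map_val]
  have vneg : ∀ m : ℕ, ∀ x : K, v ((-1) ^ m * x) = v x := by
    intro m x
    rw [map_mul, map_pow, Valuation.map_neg, map_one, one_pow, one_mul]
  constructor
  · -- coeff (n-1)
    have hk : n - 1 ≤ n := by omega
    have hm : n - (n - 1) = 1 := by omega
    rw [key (n - 1) hk, hm, vneg]
    have hsum : ∑ t ∈ Finset.univ.powersetCard 1, ∏ i ∈ t, c i = ∑ i : Fin n, c i := by
      simp [Finset.powersetCard_one, Finset.sum_map]
    rw [hsum, ← Finset.add_sum_erase _ c (Finset.mem_univ z),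
      Valuation.map_add_eq_of_lt_left, hc1]
    rw [hc1]
    refine Valuation.map_sum_lt v one_ne_zero ?_
    intro i hi
    rw [Finset.mem_erase] at hi
    exact hci i fun h => hi.1 (Fin.ext h)
  · intro k hk
    have hkn : k ≤ n := by omega
    have hm : 2 ≤ n - k := by omega
    rw [key k hkn, vneg]
    refine Valuation.map_sum_lt v one_ne_zero ?_
    intro t ht
    rw [Finset.mem_powersetCard] at ht
    -- find an element of t different from z
    have h1lt : 1 < t.card := by omega
    obtain ⟨a, ha, b, hb, hab⟩ := Finset.one_lt_card.mp h1lt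
    have hex : ∃ i ∈ t, (i : ℕ) ≠ 0 := by
      by_cases hza : (a : ℕ) = 0
      · refine ⟨b, hb, fun h => hab ?_⟩
        exact Fin.ext (hza.trans h.symm)
      · exact ⟨a, ha, hza⟩
    obtain ⟨i, hit, hi0⟩ := hex
    rw [map_prod]
    have hrest : ∏ j ∈ t.erase i, v (c j) ≤ 1 :=
      Finset.prod_le_one' fun j _ => hle j
    calc ∏ j ∈ t, v (c j) = v (c i) * ∏ j ∈ t.erase i, v (c j) :=
          (Finset.mul_prod_erase t _ hit).symm
      _ ≤ v (c i) * 1 := mul_le_mul_right hrest _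
      _ = v (c i) := mul_one _
      _ < 1 := hci i hi0
end

section
/- Let H be a torsion-free abelian group, G a subgroup of H, a ∈ H, and n ≥ 1 an integer with n·a ∈ G. Suppose H is generated as a group by G ∪ {a}. Let q be an integer coprime to n. Then for every x ∈ H we have n·x ∈ G, and x is divisible by q in H (i.e., there is y ∈ H with q·y = x) if and only if n·x is divisible by q within G (i.e., there is h ∈ G with q·h = n·x). -/
theorem AddSubgroup.nsmul_mem_of_closure_union_singleton_eq_top {H : Type*} [AddCommGroup H]
    {G : AddSubgroup H} {a : H} {n : ℕ} (hna : n • a ∈ G)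
    (hgen : closure ((G : Set H) ∪ {a}) = ⊤) (z : H) : n • z ∈ G := by
  have hz : z ∈ closure ((G : Set H) ∪ {a}) := hgen ▸ mem_top z
  induction hz using closure_induction with
  | mem w hw =>
    rcases hw with hw | rfl
    · exact G.nsmul_mem hw n
    · exact hna
  | zero => simp
  | add u v _ _ hu hv => simpa [smul_add] using G.add_mem hu hv
  | neg u _ hu => simpa [smul_neg] using G.neg_mem hu

theorem exists_smul_eq_of_isCoprime_of_smul_eq {R M : Type*} [CommSemiring R]
    [AddCommMonoid M] [Module R M] {q n : R} (hq : IsCoprime q n) {x h : M}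
    (hqh : q • h = n • x) : ∃ y, q • y = x := by
  obtain ⟨r, s, hrs⟩ := hq
  refine ⟨r • x + s • h, ?_⟩
  calc q • (r • x + s • h) = (r * q) • x + s • (q • h) := by
        rw [smul_add, smul_smul, smul_comm q s, mul_comm]
    _ = (r * q + s * n) • x := by rw [hqh, smul_smul, add_smul]
    _ = x := by rw [hrs, one_smul]

theorem stmt5_general {H : Type*} [AddCommGroup H]
    (G : AddSubgroup H) (a : H) (n : ℕ) (hna : n • a ∈ G)
    (hgen : AddSubgroup.closure (↑G ∪ {a}) = ⊤)
    (q : ℤ) (hq : IsCoprime q (n : ℤ)) (x : H) :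
    n • x ∈ G ∧ ((∃ y : H, q • y = x) ↔ ∃ h ∈ G, q • h = n • x) := by
  have hnG := AddSubgroup.nsmul_mem_of_closure_union_singleton_eq_top hna hgen
  refine ⟨hnG x, ?_, ?_⟩
  · rintro ⟨y, rfl⟩
    exact ⟨n • y, hnG y, smul_comm q n y⟩
  · rintro ⟨h, -, hqh⟩
    exact exists_smul_eq_of_isCoprime_of_smul_eq hq (hqh.trans (natCast_zsmul x n).symm)

/-- Let `H` be a torsion-free abelian group, `G` a subgroup, `a ∈ H`, `n ≥ 1`
with `n • a ∈ G`, and suppose `H` is generated by `G ∪ {a}`. Let `q` be an integer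
coprime to `n`. Then for every `x ∈ H`, `n • x ∈ G`, and `q` divides `x` in `H`
iff `q` divides `n • x` within `G`. -/
theorem stmt5 {H : Type*} [AddCommGroup H] [NoZeroSMulDivisors ℤ H]
    (G : AddSubgroup H) (a : H) (n : ℕ) (hn : 1 ≤ n) (hna : n • a ∈ G)
    (hgen : AddSubgroup.closure (↑G ∪ {a}) = ⊤)
    (q : ℤ) (hq : IsCoprime q (n : ℤ)) (x : H) :
    n • x ∈ G ∧ ((∃ y : H, q • y = x) ↔ ∃ h ∈ G, q • h = n • x) :=
  stmt5_general G a n hna hgen q hq x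
end

section
/- Let H be a torsion-free abelian group, G a subgroup of H, a ∈ H, and n ≥ 1 an integer with b := n·a ∈ G. Suppose b is not divisible in G by any prime factor of n (i.e., for every prime q dividing n there is no h ∈ G with q·h = b). Then m·a ∉ G for every integer m with 0 < m < n. -/
/-- Let `H` be a torsion-free abelian group, `G` a subgroup, `a ∈ H`, `n ≥ 1`
with `b := n • a ∈ G`. Suppose `b` is not divisible in `G` by any prime factor
of `n`. Then `m • a ∉ G` for every integer `m` with `0 < m < n`. -/
theorem stmt6 {H : Type*} [AddCommGroup H] [NoZeroSMulDivisors ℤ H]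
    (G : AddSubgroup H) (a : H) (n : ℕ) (hn : 1 ≤ n) (hb : n • a ∈ G)
    (hnodiv : ∀ qp : ℕ, qp.Prime → qp ∣ n → ¬∃ h ∈ G, qp • h = n • a) :
    ∀ m : ℤ, 0 < m → m < n → m • a ∉ G := by
  intro m hm hmn hma
  set M : ℕ := m.toNat with hM
  have hMm : (M : ℤ) = m := Int.toNat_of_nonneg hm.le
  have hMpos : 0 < M := by omega
  have hMn : M < n := by
    have := hmn; omega
  set d : ℕ := Nat.gcd M n with hd
  have hdpos : 0 < d := Nat.gcd_pos_of_pos_left _ hMpos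
  -- d • a ∈ G via Bezout
  have hMa : M • a ∈ G := by
    rw [← hMm, natCast_zsmul] at hma
    exact hma
  have hda : d • a ∈ G := by
    have bez : (d : ℤ) = M * Nat.gcdA M n + n * Nat.gcdB M n := Nat.gcd_eq_gcd_ab M n
    have : (d : ℤ) • a = Nat.gcdA M n • (M • a) + Nat.gcdB M n • (n • a) := by
      rw [← natCast_zsmul a M, ← natCast_zsmul a n, smul_smul, smul_smul,
        ← add_smul, bez]
      ring_nf
    have hmem : (d : ℤ) • a ∈ G := by
      rw [this]
      exact G.add_mem (G.zsmul_mem hMa _) (G.zsmul_mem hb _)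
    rwa [natCast_zsmul] at hmem
  have hdn : d ∣ n := Nat.gcd_dvd_right M n
  have hdltn : d < n := lt_of_le_of_lt (Nat.le_of_dvd hMpos (Nat.gcd_dvd_left M n)) hMn
  -- n/d > 1 has a prime factor q
  obtain ⟨k, hk⟩ := hdn
  have hk1 : 1 < k := by
    rcases Nat.lt_or_ge k 2 with h | h
    · interval_cases k <;> omega
    · omega
  obtain ⟨q, hq, hqk⟩ := Nat.exists_prime_and_dvd (by omega : k ≠ 1)
  obtain ⟨t, ht⟩ := hqk
  have hqn : q ∣ n := ⟨d * t, by rw [hk, ht]; ring⟩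
  refine hnodiv q hq hqn ⟨(d * t) • a, ?_, ?_⟩
  · rw [mul_comm, mul_smul]; exact G.nsmul_mem hda t
  · rw [← mul_smul, hk, ht]; ring_nf
end

section
/- Let Δ be a linearly ordered abelian group (written additively), Γ a subgroup of Δ, q a prime, and δ ∈ Δ with γ := q·δ ∈ Γ. Suppose Δ is generated as a group by Γ ∪ {δ}. Let ε ∈ Γ be the least positive element of Γ (that is, ε > 0 and every x ∈ Γ with x > 0 satisfies x ≥ ε). Assume that for every integer j with 0 ≤ j < q, the element γ + j·ε is not divisible by q in Γ (i.e., there is no θ ∈ Γ with q·θ = γ + j·ε). Then there is no d ∈ Δ with 0 < d < ε; that is, ε is also the least positive element of Δ. -/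
/-!
Put `γ = q • δ` and write `d ∈ Δ` as `g + n • δ` with `g ∈ Γ`. If `0 < d < ε`, then
`q • d ∈ Γ` lies in `[0, q • ε)`, so it is a multiple `j • ε`; hence
`n • γ = q • (n • δ) = j • ε - q • g` lies in `qΓ + ℤε`. As `d ∉ Γ`, `q ∤ n`, and since also `q • γ ∈ qΓ`, Bézout puts `γ` itself in
`qΓ + ℤε`. Reducing the coefficient of `ε` modulo `q` then makes some `γ + j • ε`, `0 ≤ j < q`,
divisible by `q` in `Γ`.
-/

namespace AddSubgroup

section AddCommGroup

variable {G : Type*} [AddCommGroup G]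

theorem mem_closure_union_singleton {H : AddSubgroup G} {a x : G} :
    x ∈ closure (↑H ∪ {a}) ↔ ∃ g ∈ H, ∃ n : ℤ, g + n • a = x := by
  simp_rw [closure_union, closure_eq, mem_sup, mem_closure_singleton, exists_exists_eq_and]

theorem mem_of_isCoprime_zsmul_mem {H : AddSubgroup G} {m n : ℤ} (hmn : IsCoprime m n) {x : G}
    (hm : m • x ∈ H) (hn : n • x ∈ H) : x ∈ H := by
  obtain ⟨u, v, huv⟩ := hmn
  have hx : x = u • m • x + v • n • x := by rw [smul_smul, smul_smul, ← add_smul, huv, one_smul]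
  rw [hx]
  exact add_mem (zsmul_mem hm u) (zsmul_mem hn v)

/-- `qΓ + ℤε`, the elements that become divisible by `q` in `Γ` after adding a multiple of `ε`. -/
def nsmulMapSupZMultiples (Γ : AddSubgroup G) (q : ℕ) (ε : G) : AddSubgroup G :=
  Γ.map (nsmulAddMonoidHom q) ⊔ zmultiples ε

theorem mem_nsmulMapSupZMultiples {Γ : AddSubgroup G} {q : ℕ} {ε x : G} :
    x ∈ Γ.nsmulMapSupZMultiples q ε ↔ ∃ θ ∈ Γ, ∃ m : ℤ, q • θ + m • ε = x := by
  simp only [nsmulMapSupZMultiples, mem_sup, mem_map, mem_zmultiples_iff, nsmulAddMonoidHom_apply,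
    exists_exists_and_eq_and, exists_exists_eq_and]

theorem exists_nsmul_eq_add_nsmul_of_mem_nsmulMapSupZMultiples {Γ : AddSubgroup G} {q : ℕ}
    (hq : 0 < q) {ε x : G} (hε : ε ∈ Γ) (hx : x ∈ Γ.nsmulMapSupZMultiples q ε) :
    ∃ j < q, ∃ θ ∈ Γ, q • θ = x + j • ε := by
  obtain ⟨θ, hθ, m, rfl⟩ := mem_nsmulMapSupZMultiples.mp hx
  have hj : ((-m) % q : ℤ) = -m - q * ((-m) / q) := by rw [Int.emod_def]
  have hlt : (-m) % q < q := Int.emod_lt_of_pos _ (by omega)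
  refine ⟨((-m) % q).toNat, by omega, θ - ((-m) / q) • ε, sub_mem hθ (zsmul_mem hε _), ?_⟩
  simp only [← natCast_zsmul]
  rw [Int.toNat_of_nonneg (Int.emod_nonneg _ (by omega)), hj,
    smul_sub, sub_smul, mul_smul, neg_smul]
  abel

end AddCommGroup

section LinearOrder

variable {Δ : Type*} [AddCommGroup Δ] [LinearOrder Δ] [IsOrderedAddMonoid Δ]

theorem exists_nsmul_eq_of_lt_nsmul {Γ : AddSubgroup Δ} {ε : Δ}
    (hεmin : ∀ x ∈ Γ, 0 < x → ε ≤ x) (hεΓ : ε ∈ Γ) :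
    ∀ (k : ℕ) {x : Δ}, x ∈ Γ → 0 ≤ x → x < k • ε → ∃ j < k, j • ε = x
  | 0, x, _, hx0, hxk => absurd (hx0.trans_lt hxk) (by simp)
  | k + 1, x, hxΓ, hx0, hxk => by
    obtain hxε | hεx := lt_or_ge x ε
    · have hx : x = 0 := (hx0.eq_or_lt.resolve_right fun h ↦ (hεmin x hxΓ h).not_gt hxε).symm
      exact ⟨0, by omega, by simp [hx]⟩
    · obtain ⟨j, hjk, hj⟩ := exists_nsmul_eq_of_lt_nsmul hεmin hεΓ k (sub_mem hxΓ hεΓ)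
        (sub_nonneg.mpr hεx) (sub_lt_iff_lt_add.mpr (succ_nsmul ε k ▸ hxk))
      exact ⟨j + 1, by omega, by rw [succ_nsmul, hj, sub_add_cancel]⟩

end LinearOrder

end AddSubgroup

theorem stmt8_general {Δ : Type*} [AddCommGroup Δ] [LinearOrder Δ] [IsOrderedAddMonoid Δ]
    (Γ : AddSubgroup Δ) (q : ℕ) (hq : q.Prime) (δ : Δ)
    (hγ : q • δ ∈ Γ)
    (hgen : AddSubgroup.closure (↑Γ ∪ {δ}) = ⊤)
    (ε : Δ) (hεΓ : ε ∈ Γ)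
    (hεleast : ∀ x ∈ Γ, 0 < x → ε ≤ x)
    (hnodiv : ∀ j : ℕ, j < q → ¬∃ θ ∈ Γ, q • θ = q • δ + j • ε) :
    ¬∃ d : Δ, 0 < d ∧ d < ε := by
  rintro ⟨d, hd0, hdε⟩
  obtain ⟨g, hg, n, rfl⟩ :=
    AddSubgroup.mem_closure_union_singleton.mp (hgen ▸ AddSubgroup.mem_top d)
  have hqd : q • (g + n • δ) = q • g + n • q • δ := by rw [nsmul_add, smul_comm]
  obtain ⟨j, -, hj⟩ := AddSubgroup.exists_nsmul_eq_of_lt_nsmul hεleast hεΓ q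
    (hqd ▸ add_mem (nsmul_mem hg q) (zsmul_mem hγ n)) (nsmul_nonneg hd0.le q)
    (nsmul_lt_nsmul_right hq.ne_zero hdε)
  have hqn : IsCoprime (q : ℤ) n := by
    refine (Nat.prime_iff_prime_int.mp hq).coprime_iff_not_dvd.mpr ?_
    rintro ⟨m, rfl⟩
    refine (hεleast _ ?_ hd0).not_gt hdε
    rw [mul_comm, mul_smul, natCast_zsmul]
    exact add_mem hg (zsmul_mem hγ m)
  have hγmem : q • δ ∈ Γ.nsmulMapSupZMultiples q ε := by
    refine AddSubgroup.mem_of_isCoprime_zsmul_mem hqn ?_ ?_ <;>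
      rw [AddSubgroup.mem_nsmulMapSupZMultiples]
    · exact ⟨q • δ, hγ, 0, by rw [zero_smul, add_zero, natCast_zsmul]⟩
    · exact ⟨-g, neg_mem hg, j, by rw [natCast_zsmul, hj, hqd, smul_neg, neg_add_cancel_left]⟩
  obtain ⟨j', hj'q, hdiv⟩ :=
    AddSubgroup.exists_nsmul_eq_add_nsmul_of_mem_nsmulMapSupZMultiples hq.pos hεΓ hγmem
  exact hnodiv j' hj'q hdiv

/-- Let `Δ` be a linearly ordered abelian group, `Γ` a subgroup, `q` a prime, and
`δ ∈ Δ` with `γ := q • δ ∈ Γ`. Suppose `Δ` is generated by `Γ ∪ {δ}`. Let `ε` be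
the least positive element of `Γ`. If for every `0 ≤ j < q` the element
`γ + j • ε` is not divisible by `q` in `Γ`, then there is no `d ∈ Δ` with
`0 < d < ε`; that is, `ε` is also the least positive element of `Δ`. -/
theorem stmt8 {Δ : Type*} [AddCommGroup Δ] [LinearOrder Δ] [IsOrderedAddMonoid Δ]
    (Γ : AddSubgroup Δ) (q : ℕ) (hq : q.Prime) (δ : Δ)
    (hγ : q • δ ∈ Γ)
    (hgen : AddSubgroup.closure (↑Γ ∪ {δ}) = ⊤)
    (ε : Δ) (hεΓ : ε ∈ Γ) (hεpos : 0 < ε)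
    (hεleast : ∀ x ∈ Γ, 0 < x → ε ≤ x)
    (hnodiv : ∀ j : ℕ, j < q → ¬∃ θ ∈ Γ, q • θ = q • δ + j • ε) :
    ¬∃ d : Δ, 0 < d ∧ d < ε :=
  stmt8_general Γ q hq δ hγ hgen ε hεΓ hεleast hnodiv
end
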